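/- arXiv:math/0511285 — 4 statements merged into one kernel-verified Lean document; each statement's English description precedes it below -/
import Mathlib

section
/- (Shub–Sullivan, holomorphic case) Let m > 1 be an integer and Θ : Δⁿ → ℂⁿ holomorphic with an isolated fixed point at 0. If every eigenvalue λ of Θ'(0) satisfies λ = 1 or λᵐ ≠ 1, then 0 is an isolated fixed point of the m-th iterate Θᵐ. -/
open Set Metric Filter Topology

noncomputable section

/-- `l` is an eigenvalue of the continuous linear map `T` on `ℂⁿ`. -/
def HasEig {n : ℕ} (T : (Fin n → ℂ) →L[ℂ] (Fin n → ℂ)) (l : ℂ) : Prop :=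
  Module.End.HasEigenvalue (T : (Fin n → ℂ) →ₗ[ℂ] (Fin n → ℂ)) l

/-- A holomorphic function on a ball in `ℂⁿ` is strictly differentiable at the center.
This is proved without several-variable analyticity, using the Schwarz-lemma bound on
complex lines to show continuity of the derivative at the center, plus the mean value
inequality. -/
lemma strict_of_diffOn {n : ℕ} {R : ℝ} (hR : 0 < R) {f : (Fin n → ℂ) → (Fin n → ℂ)}
    (hf : DifferentiableOn ℂ f (ball 0 R)) :
    HasStrictFDerivAt f (fderiv ℂ f 0) 0 := by
  set A := fderiv ℂ f 0 with hAdef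
  have hopen : IsOpen (ball (0 : Fin n → ℂ) R) := isOpen_ball
  have hdiffAt : ∀ u : Fin n → ℂ, ‖u‖ < R → DifferentiableAt ℂ f u := by
    intro u hu
    exact hf.differentiableAt (hopen.mem_nhds (by simpa [mem_ball, dist_zero_right] using hu))
  -- Step A: continuity of the derivative at 0 (quantitative)
  have stepA : ∀ c : ℝ, 0 < c → ∃ δ : ℝ, 0 < δ ∧ δ ≤ R / 4 ∧
      ∀ u : Fin n → ℂ, ‖u‖ < δ → ‖fderiv ℂ f u - A‖ ≤ c := by
    intro c hc
    -- uniform continuity on the compact ball of radius 3R/4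
    have hKsub : closedBall (0 : Fin n → ℂ) (3 * R / 4) ⊆ ball 0 R := by
      apply closedBall_subset_ball; linarith
    have hKc : IsCompact (closedBall (0 : Fin n → ℂ) (3 * R / 4)) := isCompact_closedBall _ _
    have hfK : ContinuousOn f (closedBall (0 : Fin n → ℂ) (3 * R / 4)) :=
      (hf.continuousOn).mono hKsub
    have huc : UniformContinuousOn f (closedBall (0 : Fin n → ℂ) (3 * R / 4)) :=
      hKc.uniformContinuousOn_of_continuous hfK
    have hε : 0 < c * R / 8 := by positivity
    obtain ⟨δ₁, hδ₁pos, hδ₁⟩ := (Metric.uniformContinuousOn_iff).1 huc (c * R / 8) hε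
    refine ⟨min δ₁ (R / 4), by positivity, min_le_right _ _, ?_⟩
    intro u hu
    have huδ₁ : ‖u‖ < δ₁ := lt_of_lt_of_le hu (min_le_left _ _)
    have huR4 : ‖u‖ < R / 4 := lt_of_lt_of_le hu (min_le_right _ _)
    have huR : ‖u‖ < R := by linarith
    have hK : ∀ w : Fin n → ℂ, ‖w‖ ≤ 3 * R / 4 → w ∈ closedBall (0 : Fin n → ℂ) (3 * R / 4) := by
      intro w hw; simpa [mem_closedBall, dist_zero_right] using hw
    refine ContinuousLinearMap.opNorm_le_bound _ hc.le ?_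
    intro v
    rcases eq_or_ne v 0 with rfl | hv
    · simp
    have hvpos : 0 < ‖v‖ := norm_pos_iff.2 hv
    set r : ℝ := R / (2 * ‖v‖) with hrdef
    have hrpos : 0 < r := by positivity
    have hrv : r * ‖v‖ = R / 2 := by rw [hrdef]; field_simp
    -- the one-variable function
    set ψ : ℂ → (Fin n → ℂ) := fun t => f (u + t • v) - f (t • v) with hψdef
    have hmem : ∀ t : ℂ, ‖t‖ < r → ‖t • v‖ < R / 2 := by
      intro t ht
      rw [norm_smul]
      calc ‖t‖ * ‖v‖ < r * ‖v‖ := by exact mul_lt_mul_of_pos_right ht hvpos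
      _ = R / 2 := hrv
    have hmem1 : ∀ t : ℂ, ‖t‖ < r → u + t • v ∈ ball (0 : Fin n → ℂ) R := by
      intro t ht
      have := hmem t ht
      have : ‖u + t • v‖ < R := by
        calc ‖u + t • v‖ ≤ ‖u‖ + ‖t • v‖ := norm_add_le _ _
        _ < R / 4 + R / 2 := by linarith
        _ < R := by linarith
      simpa [mem_ball, dist_zero_right] using this
    have hmem2 : ∀ t : ℂ, ‖t‖ < r → t • v ∈ ball (0 : Fin n → ℂ) R := by
      intro t ht
      have := hmem t ht
      have : ‖t • v‖ < R := by linarith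
      simpa [mem_ball, dist_zero_right] using this
    have hline1 : Differentiable ℂ (fun t : ℂ => u + t • v) :=
      ((differentiable_id).smul_const v).const_add u
    have hline2 : Differentiable ℂ (fun t : ℂ => t • v) :=
      (differentiable_id).smul_const v
    have hψdiff : DifferentiableOn ℂ ψ (ball (0 : ℂ) r) := by
      have hc1 : DifferentiableOn ℂ (f ∘ fun t : ℂ => u + t • v) (ball (0 : ℂ) r) :=
        hf.comp hline1.differentiableOn (fun t ht =>
          hmem1 t (by simpa [mem_ball, dist_zero_right] using ht))
      have hc2 : DifferentiableOn ℂ (f ∘ fun t : ℂ => t • v) (ball (0 : ℂ) r) :=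
        hf.comp hline2.differentiableOn (fun t ht =>
          hmem2 t (by simpa [mem_ball, dist_zero_right] using ht))
      exact DifferentiableOn.sub hc1 hc2
    -- ψ maps the disc into a small ball around ψ 0
    have hψmaps : MapsTo ψ (ball (0 : ℂ) r) (ball (ψ 0) (3 * (c * R / 8))) := by
      intro t ht
      have ht' : ‖t‖ < r := by simpa [mem_ball, dist_zero_right] using ht
      have h1 : ‖u + t • v‖ ≤ 3 * R / 4 := by
        have := hmem t ht'
        calc ‖u + t • v‖ ≤ ‖u‖ + ‖t • v‖ := norm_add_le _ _
        _ ≤ 3 * R / 4 := by linarith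
      have h2 : ‖t • v‖ ≤ 3 * R / 4 := by
        have := hmem t ht'; linarith
      have h3 : ‖u‖ ≤ 3 * R / 4 := by linarith
      have h4 : ‖(0 : Fin n → ℂ)‖ ≤ 3 * R / 4 := by simp; linarith
      have e1 : dist (f (u + t • v)) (f (t • v)) < c * R / 8 := by
        apply hδ₁ _ (hK _ h1) _ (hK _ h2)
        simpa [dist_eq_norm] using huδ₁
      have e2 : dist (f (u + (0:ℂ) • v)) (f ((0:ℂ) • v)) < c * R / 8 := by
        apply hδ₁ _ (hK _ (by simpa using h3)) _ (hK _ (by simpa using h4))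
        simpa [dist_eq_norm] using huδ₁
      have : dist (ψ t) (ψ 0) < 2 * (c * R / 8) := by
        rw [hψdef]
        simp only [dist_eq_norm] at e1 e2 ⊢
        calc ‖f (u + t • v) - f (t • v) - (f (u + (0:ℂ) • v) - f ((0:ℂ) • v))‖
            ≤ ‖f (u + t • v) - f (t • v)‖ + ‖f (u + (0:ℂ) • v) - f ((0:ℂ) • v)‖ :=
              norm_sub_le _ _
        _ < 2 * (c * R / 8) := by linarith
      have : dist (ψ t) (ψ 0) < 3 * (c * R / 8) := by linarith
      simpa [mem_ball] using this
    -- derivative of ψ at 0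
    have hd1 : HasDerivAt (fun t : ℂ => f (u + t • v)) ((fderiv ℂ f u) v) 0 := by
      have hu' : HasFDerivAt f (fderiv ℂ f u) (u + (0:ℂ) • v) := by
        simpa using (hdiffAt u huR).hasFDerivAt
      have hl : HasDerivAt (fun t : ℂ => u + t • v) v 0 := by
        simpa using ((hasDerivAt_id (0:ℂ)).smul_const v).const_add u
      have := hu'.comp_hasDerivAt (0:ℂ) hl
      exact this
    have hd2 : HasDerivAt (fun t : ℂ => f (t • v)) (A v) 0 := by
      have h0' : HasFDerivAt f A ((0:ℂ) • v) := by
        simpa using (hdiffAt 0 (by simpa using hR)).hasFDerivAt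
      have hl : HasDerivAt (fun t : ℂ => t • v) v 0 := by
        simpa using (hasDerivAt_id (0:ℂ)).smul_const v
      have := h0'.comp_hasDerivAt (0:ℂ) hl
      exact this
    have hdψ : HasDerivAt ψ ((fderiv ℂ f u) v - A v) 0 := hd1.sub hd2
    have hbound : ‖deriv ψ 0‖ ≤ 3 * (c * R / 8) / r :=
      Complex.norm_deriv_le_div_of_mapsTo_ball hψdiff (hψmaps.mono_right ball_subset_closedBall) hrpos
    rw [hdψ.deriv] at hbound
    have hval : 3 * (c * R / 8) / r = 3 / 4 * c * ‖v‖ := by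
      rw [hrdef]; field_simp; ring
    have : ‖(fderiv ℂ f u - A) v‖ ≤ 3 / 4 * c * ‖v‖ := by
      rw [ContinuousLinearMap.sub_apply]
      calc ‖(fderiv ℂ f u) v - A v‖ ≤ 3 * (c * R / 8) / r := hbound
      _ = 3 / 4 * c * ‖v‖ := hval
    calc ‖(fderiv ℂ f u - A) v‖ ≤ 3 / 4 * c * ‖v‖ := this
    _ ≤ c * ‖v‖ := by nlinarith [norm_nonneg v]
  -- Conclude strict differentiability via the mean value inequality
  rw [hasStrictFDerivAt_iff_isLittleO]
  rw [Asymptotics.isLittleO_iff]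
  intro c hc
  obtain ⟨δ, hδpos, hδR, hδ⟩ := stepA c hc
  have hmem : (ball (0 : Fin n → ℂ) δ) ×ˢ (ball (0 : Fin n → ℂ) δ) ∈ 𝓝 ((0 : Fin n → ℂ), (0 : Fin n → ℂ)) :=
    prod_mem_nhds (ball_mem_nhds _ hδpos) (ball_mem_nhds _ hδpos)
  filter_upwards [hmem] with p hp
  obtain ⟨hp1, hp2⟩ := hp
  have hconv : Convex ℝ (ball (0 : Fin n → ℂ) δ) := convex_ball _ _
  have hball : ∀ z : Fin n → ℂ, z ∈ ball (0 : Fin n → ℂ) δ → z ∈ ball (0 : Fin n → ℂ) R := by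
    intro z hz
    rw [mem_ball, dist_zero_right] at hz ⊢
    linarith
  have hder : ∀ z ∈ ball (0 : Fin n → ℂ) δ,
      HasFDerivWithinAt (fun w => f w - A w) (fderiv ℂ f z - A) (ball (0 : Fin n → ℂ) δ) z := by
    intro z hz
    have hz' : ‖z‖ < R := by
      have := hball z hz; rwa [mem_ball, dist_zero_right] at this
    exact ((hdiffAt z hz').hasFDerivAt.sub A.hasFDerivAt).hasFDerivWithinAt
  have hbd : ∀ z ∈ ball (0 : Fin n → ℂ) δ, ‖fderiv ℂ f z - A‖ ≤ c := by
    intro z hz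
    rw [mem_ball, dist_zero_right] at hz
    exact hδ z hz
  have := hconv.norm_image_sub_le_of_norm_hasFDerivWithin_le hder hbd hp2 hp1
  have heq : (f p.1 - A p.1) - (f p.2 - A p.2) = f p.1 - f p.2 - A (p.1 - p.2) := by
    rw [map_sub]; abel
  rw [heq] at this
  exact this

/-- **Shub–Sullivan, holomorphic case.** If `Θ` is holomorphic with an
isolated fixed point at `0` and every eigenvalue `λ` of `Θ'(0)` satisfies `λ = 1` or
`λ ^ m ≠ 1`, then `0` is an isolated fixed point of the `m`-th iterate `Θ^[m]`. -/
theorem isolated_fixedPoint_iterate_of_eigenvalue_condition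
    {n : ℕ} (R : ℝ) (hR : 0 < R) (m : ℕ) (hm : 1 < m)
    (Θ : (Fin n → ℂ) → (Fin n → ℂ))
    (hΘ : DifferentiableOn ℂ Θ (ball (0 : Fin n → ℂ) R))
    (hfix : Θ 0 = 0)
    (hiso : ∃ U ∈ 𝓝 (0 : Fin n → ℂ), ∀ x ∈ U, Θ x = x → x = 0)
    (heig : ∀ l : ℂ, HasEig (fderiv ℂ Θ 0) l → l = 1 ∨ l ^ m ≠ 1) :
    ∃ U ∈ 𝓝 (0 : Fin n → ℂ), ∀ x ∈ U, Θ^[m] x = x → x = 0 := by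
  classical
  obtain ⟨W, hW, hWfix⟩ := hiso
  set A : (Fin n → ℂ) →L[ℂ] (Fin n → ℂ) := fderiv ℂ Θ 0 with hAdef
  have hstrict : HasStrictFDerivAt Θ A 0 := strict_of_diffOn hR hΘ
  have hiterfix : ∀ k : ℕ, Θ^[k] 0 = 0 := fun k => Function.iterate_fixed hfix k
  have hiter : ∀ k : ℕ, HasStrictFDerivAt (Θ^[k]) (A ^ k) 0 := by
    intro k
    induction k with
    | zero =>
      simpa [ContinuousLinearMap.one_def] using
        hasStrictFDerivAt_id (𝕜 := ℂ) (0 : Fin n → ℂ)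
    | succ k ih =>
      have h2 : HasStrictFDerivAt Θ A (Θ^[k] 0) := by rw [hiterfix k]; exact hstrict
      have h3 := h2.comp 0 ih
      have h5 : A.comp (A ^ k) = A ^ (k + 1) := by rw [pow_succ']; rfl
      rw [← h5, Function.iterate_succ']
      exact h3
  set S : (Fin n → ℂ) → (Fin n → ℂ) := fun x => ∑ k ∈ Finset.range m, Θ^[k] x with hSdef
  set B : (Fin n → ℂ) →L[ℂ] (Fin n → ℂ) := ∑ k ∈ Finset.range m, A ^ k with hBdef
  have hSstrict : HasStrictFDerivAt S B 0 :=
    HasStrictFDerivAt.fun_sum (fun k _ => hiter k)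
  -- B is bijective
  set a : Module.End ℂ (Fin n → ℂ) := (A : (Fin n → ℂ) →ₗ[ℂ] (Fin n → ℂ)) with hadef
  set p : Polynomial ℂ := ∑ k ∈ Finset.range m, Polynomial.X ^ k with hpdef
  have hpcoeff : p.coeff (m - 1) = 1 := by
    rw [hpdef, Polynomial.finset_sum_coeff]
    rw [Finset.sum_congr rfl (fun k _ => Polynomial.coeff_X_pow k (m - 1))]
    rw [Finset.sum_ite_eq]
    have hlt : m - 1 < m := by omega
    simp [Finset.mem_range, hlt]
  have hpdeg : 0 < p.degree := by
    have h1 : (m - 1 : ℕ) ≤ p.natDegree :=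
      Polynomial.le_natDegree_of_ne_zero (by rw [hpcoeff]; exact one_ne_zero)
    have h2 : 0 < p.natDegree := by omega
    exact Polynomial.natDegree_pos_iff_degree_pos.mp h2
  have haeval : Polynomial.aeval a p = ∑ k ∈ Finset.range m, a ^ k := by
    rw [hpdef]
    simp [map_sum, map_pow]
  have hBlin : (B : (Fin n → ℂ) →ₗ[ℂ] (Fin n → ℂ)) = Polynomial.aeval a p := by
    rw [haeval, hBdef, ContinuousLinearMap.coe_sum]
    refine Finset.sum_congr rfl fun k _ => ?_
    show ContinuousLinearMap.toLinearMapRingHom (A ^ k) = a ^ k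
    rw [map_pow]
    rfl
  have hpeval : ∀ μ : ℂ, p.eval μ = ∑ k ∈ Finset.range m, μ ^ k := by
    intro μ
    rw [hpdef, Polynomial.eval_finset_sum]
    exact Finset.sum_congr rfl (fun k _ => by rw [Polynomial.eval_pow, Polynomial.eval_X])
  have hinj : Function.Injective (B : (Fin n → ℂ) →ₗ[ℂ] (Fin n → ℂ)) := by
    rw [← LinearMap.ker_eq_bot]
    by_contra hker
    obtain ⟨v, hv, hv0⟩ := Submodule.exists_mem_ne_zero_of_ne_bot hker
    have heigv : Module.End.HasEigenvalue (Polynomial.aeval a p) 0 := by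
      apply Module.End.hasEigenvalue_of_hasEigenvector (x := v)
      constructor
      · rw [Module.End.mem_eigenspace_iff, ← hBlin]
        simpa using (LinearMap.mem_ker.mp hv)
      · exact hv0
    have hspec : (0:ℂ) ∈ spectrum ℂ (Polynomial.aeval a p) :=
      Module.End.hasEigenvalue_iff_mem_spectrum.mp heigv
    rw [spectrum.map_polynomial_aeval_of_degree_pos a p hpdeg] at hspec
    obtain ⟨μ, hμspec, hμeval⟩ := hspec
    have hμeig : HasEig A μ :=
      Module.End.HasEigenvalue.of_mem_spectrum hμspec
    have hμ0 : ∑ k ∈ Finset.range m, μ ^ k = 0 := by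
      rw [← hpeval]; exact hμeval
    rcases heig μ hμeig with h1 | h2
    · rw [h1] at hμ0
      simp at hμ0
      omega
    · apply h2
      have h3 := geom_sum_mul μ m
      rw [hμ0, zero_mul] at h3
      exact sub_eq_zero.mp h3.symm
  have hbij : Function.Bijective (B : (Fin n → ℂ) →ₗ[ℂ] (Fin n → ℂ)) :=
    ⟨hinj, (LinearMap.injective_iff_surjective).mp hinj⟩
  set e : (Fin n → ℂ) ≃L[ℂ] (Fin n → ℂ) :=
    (LinearEquiv.ofBijective (B : (Fin n → ℂ) →ₗ[ℂ] (Fin n → ℂ)) hbij).toContinuousLinearEquiv with hedef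
  have hecoe : (e : (Fin n → ℂ) →L[ℂ] (Fin n → ℂ)) = B := by
    ext x
    rfl
  have hSstrict' : HasStrictFDerivAt S (e : (Fin n → ℂ) →L[ℂ] (Fin n → ℂ)) 0 := by
    rw [hecoe]; exact hSstrict
  set Φ := hSstrict'.toOpenPartialHomeomorph S with hΦdef
  have hΦcoe : (Φ : (Fin n → ℂ) → (Fin n → ℂ)) = S := hSstrict'.toOpenPartialHomeomorph_coe
  have hV0 : (0 : Fin n → ℂ) ∈ Φ.source := hSstrict'.mem_toOpenPartialHomeomorph_source
  have hVopen : IsOpen Φ.source := Φ.open_source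
  have hVinj : Set.InjOn S Φ.source := by
    rw [← hΦcoe]; exact Φ.injOn
  have hcont : ContinuousAt Θ 0 := hstrict.hasFDerivAt.differentiableAt.continuousAt
  have hpre : Θ ⁻¹' Φ.source ∈ 𝓝 (0 : Fin n → ℂ) := by
    apply hcont.preimage_mem_nhds
    rw [hfix]
    exact hVopen.mem_nhds hV0
  refine ⟨W ∩ Φ.source ∩ Θ ⁻¹' Φ.source,
    Filter.inter_mem (Filter.inter_mem hW (hVopen.mem_nhds hV0)) hpre, ?_⟩
  rintro x ⟨⟨hxW, hxV⟩, hxpre⟩ hx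
  have key : S (Θ x) = S x := by
    have h1 : S (Θ x) = ∑ k ∈ Finset.range m, Θ^[k + 1] x := by
      rw [hSdef]
      exact Finset.sum_congr rfl (fun k _ => (Function.iterate_succ_apply Θ k x).symm)
    have h2 : ∑ k ∈ Finset.range (m + 1), Θ^[k] x
        = (∑ k ∈ Finset.range m, Θ^[k] x) + Θ^[m] x := Finset.sum_range_succ _ m
    have h3 : ∑ k ∈ Finset.range (m + 1), Θ^[k] x
        = (∑ k ∈ Finset.range m, Θ^[k + 1] x) + Θ^[0] x := Finset.sum_range_succ' _ m
    rw [h1, hSdef]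
    have h4 : (∑ k ∈ Finset.range m, Θ^[k + 1] x) + x
        = (∑ k ∈ Finset.range m, Θ^[k] x) + x := by
      have h5 := h2.symm.trans h3
      rw [hx] at h5
      simpa using h5.symm
    exact add_right_cancel h4
  have hΘx : Θ x = x := hVinj hxpre hxV key
  exact hWfix x hxW hΘx
end
end

section
/- For the holomorphic system ẋ = F(x) with 0 an isolated singularity, there exist δ > 0 and T₀ > 0 such that for every T ∈ (0, T₀], the system has no periodic orbit of (least) period T that intersects the closed ball of radius δ around 0. -/
open Set Metric Filter Topology Real

noncomputable section

/-- `x : ℝ → ℂⁿ` is a nonconstant periodic solution of `ẋ = F(x)` staying in `Δ`,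
with least positive period `T`. -/
def IsPerSol {n : ℕ} (F : (Fin n → ℂ) → (Fin n → ℂ)) (Δ : Set (Fin n → ℂ))
    (x : ℝ → Fin n → ℂ) (T : ℝ) : Prop :=
  (∀ t, x t ∈ Δ) ∧ (∀ t, HasDerivAt x (F (x t)) t) ∧ 0 < T ∧
    Function.Periodic x T ∧ (∃ t, x t ≠ x 0) ∧
    ∀ s, 0 < s → Function.Periodic x s → T ≤ s

/-- Cauchy-estimate based Lipschitz bound on the half-ball. -/
lemma lip_aux {n : ℕ} {R : ℝ} (hR : 0 < R) {F : (Fin n → ℂ) → (Fin n → ℂ)}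
    (hF : DifferentiableOn ℂ F (ball (0 : Fin n → ℂ) R)) {M₁ : ℝ}
    (hM₁ : ∀ y ∈ closedBall (0 : Fin n → ℂ) (3 * R / 4), ‖F y‖ ≤ M₁)
    {a b : Fin n → ℂ} (ha : ‖a‖ ≤ R / 2) (hb : ‖b‖ ≤ R / 2) :
    ‖F b - F a‖ ≤ (8 * M₁ / R) * ‖b - a‖ := by
  rcases eq_or_ne b a with rfl | hne
  · simp
  have hba : 0 < ‖b - a‖ := by
    simpa [sub_eq_zero] using hne
  have hM₁0 : 0 ≤ M₁ := le_trans (norm_nonneg _) (hM₁ 0 (by simp; positivity))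
  set g : ℂ → (Fin n → ℂ) := fun z => F (a + z • (b - a)) with hg
  set ρ : ℝ := (R / 8) / ‖b - a‖ with hρ
  have hρ0 : 0 < ρ := by positivity
  -- points in the disc of radius ρ around a real s ∈ [0,1] map into closedBall (3R/4)
  have key : ∀ s : ℝ, s ∈ Icc (0:ℝ) 1 → ∀ z : ℂ, dist z s ≤ ρ →
      ‖a + z • (b - a)‖ ≤ 3 * R / 4 := by
    intro s hs z hz
    have h1 : ‖a + z • (b - a)‖ ≤ ‖a + (s:ℂ) • (b - a)‖ + ‖(z - s) • (b - a)‖ := by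
      have : a + z • (b - a) = (a + (s:ℂ) • (b - a)) + (z - (s:ℂ)) • (b - a) := by
        module
      rw [this]; exact norm_add_le _ _
    have h2 : ‖a + (s:ℂ) • (b - a)‖ ≤ R / 2 := by
      have heq : a + (s:ℂ) • (b - a) = ((1:ℂ) - (s:ℂ)) • a + (s:ℂ) • b := by
        module
      have hn1 : ‖(1:ℂ) - (s:ℂ)‖ = 1 - s := by
        rw [show (1:ℂ) - (s:ℂ) = ((1 - s : ℝ) : ℂ) by push_cast; ring,
          Complex.norm_real, Real.norm_of_nonneg (by linarith [hs.2])]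
      have hn2 : ‖(s:ℂ)‖ = s := by
        rw [Complex.norm_real, Real.norm_of_nonneg hs.1]
      rw [heq]
      calc ‖((1:ℂ) - (s:ℂ)) • a + (s:ℂ) • b‖ ≤ ‖((1:ℂ) - (s:ℂ)) • a‖ + ‖(s:ℂ) • b‖ :=
            norm_add_le _ _
        _ = (1 - s) * ‖a‖ + s * ‖b‖ := by rw [norm_smul, norm_smul, hn1, hn2]
        _ ≤ (1 - s) * (R/2) + s * (R/2) := by
            gcongr <;> [linarith [hs.2]; exact hs.1]
        _ = R / 2 := by ring
    have h3 : ‖(z - (s:ℂ)) • (b - a)‖ ≤ R / 8 := by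
      rw [norm_smul]
      have : ‖z - (s:ℂ)‖ ≤ ρ := by rwa [← dist_eq_norm]
      calc ‖z - (s:ℂ)‖ * ‖b - a‖ ≤ ρ * ‖b - a‖ := by gcongr
        _ = R / 8 := by rw [hρ, div_mul_cancel₀ _ hba.ne']
    linarith
  -- g is differentiable at every point of the disc around s
  have hgd : ∀ s : ℝ, s ∈ Icc (0:ℝ) 1 → ∀ z ∈ closedBall (s:ℂ) ρ, DifferentiableAt ℂ g z := by
    intro s hs z hz
    have hmem : a + z • (b - a) ∈ ball (0 : Fin n → ℂ) R := by
      rw [mem_ball_zero_iff]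
      have := key s hs z (mem_closedBall.mp hz)
      linarith
    have hFd : DifferentiableAt ℂ F (a + z • (b - a)) :=
      hF.differentiableAt (isOpen_ball.mem_nhds hmem)
    exact hFd.comp z (by fun_prop)
  -- derivative bound via Cauchy estimate
  have hder : ∀ s : ℝ, s ∈ Icc (0:ℝ) 1 → ‖deriv g (s:ℂ)‖ ≤ M₁ / ρ := by
    intro s hs
    apply Complex.norm_deriv_le_of_forall_mem_sphere_norm_le hρ0
    · apply DifferentiableOn.diffContOnCl
      rw [closure_ball _ hρ0.ne']
      exact fun z hz => (hgd s hs z hz).differentiableWithinAt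
    · intro z hz
      exact hM₁ _ (mem_closedBall_zero_iff.mpr (key s hs z (le_of_eq hz)))
  -- mean value inequality along the segment
  have hmvt : ∀ t ∈ Icc (0:ℝ) 1, ‖(fun u : ℝ => g u) t - (fun u : ℝ => g u) 0‖
      ≤ (M₁ / ρ) * (t - 0) := by
    apply norm_image_sub_le_of_norm_deriv_le_segment'
      (f' := fun u : ℝ => deriv g (u:ℂ))
    · intro u hu
      have : HasDerivAt (fun v : ℝ => g (v:ℂ)) (deriv g (u:ℂ)) u := by
        have h1 : HasDerivAt g (deriv g (u:ℂ)) (u:ℂ) :=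
          (hgd u hu _ (mem_closedBall_self hρ0.le)).hasDerivAt
        have h2 := h1.scomp u Complex.ofRealCLM.hasDerivAt
        simp at h2
        exact h2
      exact this.hasDerivWithinAt
    · intro u hu
      exact hder u (Ico_subset_Icc_self hu)
  have h1 := hmvt 1 (by norm_num)
  have e0 : g ((0:ℝ):ℂ) = F a := by simp [hg]
  have e1 : g ((1:ℝ):ℂ) = F b := by simp [hg]
  have hρval : M₁ / ρ = 8 * M₁ / R * ‖b - a‖ := by
    rw [hρ]; field_simp
  simp only [Complex.ofReal_zero, Complex.ofReal_one] at e0 e1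
  rw [show (fun u : ℝ => g u) 1 = g ((1:ℝ):ℂ) by norm_num, show (fun u : ℝ => g u) 0 = g ((0:ℝ):ℂ) by norm_num, Complex.ofReal_zero, Complex.ofReal_one] at h1
  rw [e0, e1] at h1
  calc ‖F b - F a‖ ≤ (M₁ / ρ) * (1 - 0) := h1
    _ = 8 * M₁ / R * ‖b - a‖ := by rw [hρval]; ring

/-- For the holomorphic system `ẋ = F(x)` with `0` an isolated
singularity, there are `δ > 0` and `T₀ > 0` such that for every `T ∈ (0, T₀]` the
system has no periodic orbit of least period `T` meeting the closed ball of
radius `δ`. -/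
theorem no_small_period_orbit_near_isolated_singularity
    {n : ℕ} (R : ℝ) (hR : 0 < R) (F : (Fin n → ℂ) → (Fin n → ℂ))
    (hF : DifferentiableOn ℂ F (ball (0 : Fin n → ℂ) R)) (hF0 : F 0 = 0)
    (hiso : ∀ x ∈ ball (0 : Fin n → ℂ) R, F x = 0 → x = 0) :
    ∃ δ T₀ : ℝ, 0 < δ ∧ closedBall (0 : Fin n → ℂ) δ ⊆ ball (0 : Fin n → ℂ) R ∧
      0 < T₀ ∧ ∀ T : ℝ, 0 < T → T ≤ T₀ →
        ∀ x : ℝ → Fin n → ℂ, IsPerSol F (ball (0 : Fin n → ℂ) R) x T →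
          ∀ t : ℝ, x t ∉ closedBall (0 : Fin n → ℂ) δ := by
  -- a bound for ‖F‖ on the closed ball of radius 3R/4
  have hKcompact : IsCompact (closedBall (0 : Fin n → ℂ) (3 * R / 4)) :=
    isCompact_closedBall _ _
  have hKsub : closedBall (0 : Fin n → ℂ) (3 * R / 4) ⊆ ball 0 R := by
    apply closedBall_subset_ball; linarith
  obtain ⟨M₁, hM₁⟩ : ∃ M₁, ∀ y ∈ closedBall (0 : Fin n → ℂ) (3 * R / 4), ‖F y‖ ≤ M₁ :=
    hKcompact.exists_bound_of_continuousOn (hF.continuousOn.mono hKsub)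
  have hM₁0 : 0 ≤ M₁ := le_trans (norm_nonneg _)
    (hM₁ 0 (by simp only [mem_closedBall, dist_self]; positivity))
  obtain ⟨L, hL⟩ : ∃ L : ℝ, L = 8 * M₁ / R + 1 := ⟨_, rfl⟩
  have hL0 : 0 < L := by rw [hL]; positivity
  have hLip : ∀ a b : Fin n → ℂ, ‖a‖ ≤ R / 2 → ‖b‖ ≤ R / 2 →
      ‖F b - F a‖ ≤ L * ‖b - a‖ := by
    intro a b ha hb
    calc ‖F b - F a‖ ≤ (8 * M₁ / R) * ‖b - a‖ := lip_aux hR hF hM₁ ha hb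
      _ ≤ L * ‖b - a‖ := by
          apply mul_le_mul_of_nonneg_right _ (norm_nonneg _)
          rw [hL]; linarith
  refine ⟨R / 8, min (R / (8 * (M₁ + 1))) (1 / (2 * L)), by positivity, ?_, by positivity, ?_⟩
  · apply closedBall_subset_ball; linarith
  intro T hT hTT₀ x hsol t₁ ht₁
  obtain ⟨hΔ, hx, -, hper, hne, -⟩ := hsol
  have hxc : Continuous x := by
    rw [continuous_iff_continuousAt]
    exact fun t => (hx t).differentiableAt.continuousAt
  have hT₁ : T * (M₁ + 1) ≤ R / 8 := by
    have h1 : T ≤ R / (8 * (M₁ + 1)) := le_trans hTT₀ (min_le_left _ _)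
    rw [le_div_iff₀ (by positivity)] at h1
    linarith
  have hTL : T * L ≤ 1 / 2 := by
    have h1 : T ≤ 1 / (2 * L) := le_trans hTT₀ (min_le_right _ _)
    rw [le_div_iff₀ (by positivity)] at h1
    calc T * L = T * (2 * L) / 2 := by ring
      _ ≤ 1 / 2 := by linarith
  rw [mem_closedBall_zero_iff] at ht₁
  -- Step 1: the solution stays in the ball of radius R/2 on [t₁, t₁+T]
  have trap : ∀ u ∈ Icc t₁ (t₁ + T), ‖x u - x t₁‖ ≤ (M₁ + 1) * (u - t₁) := by
    have hclosed : IsClosed ({u : ℝ | ‖x u - x t₁‖ ≤ (M₁ + 1) * (u - t₁)} ∩ Icc t₁ (t₁ + T)) := by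
      apply IsClosed.inter _ isClosed_Icc
      have : Continuous fun u => ‖x u - x t₁‖ - (M₁ + 1) * (u - t₁) := by fun_prop
      simpa [sub_nonpos] using isClosed_le (by fun_prop) (by fun_prop :
        Continuous fun u : ℝ => (M₁ + 1) * (u - t₁))
    apply hclosed.Icc_subset_of_forall_exists_gt
    · simp
    · rintro c ⟨hc1, hc2⟩ y hy
      have hxcnorm : ‖x c‖ ≤ R / 4 := by
        have htri : ‖x c‖ ≤ ‖x t₁‖ + ‖x c - x t₁‖ := by
          simpa using norm_add_le (x t₁) (x c - x t₁)
        have hmul : (M₁ + 1) * (c - t₁) ≤ (M₁ + 1) * T :=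
          mul_le_mul_of_nonneg_left (by linarith [hc2.1, hc2.2]) (by positivity)
        have hc1' : ‖x c - x t₁‖ ≤ (M₁ + 1) * (c - t₁) := hc1
        nlinarith [hT₁]
      -- continuity: pick ε so that x stays within R/8 of x c on [c, c+ε]
      have : ∀ᶠ v in 𝓝 c, ‖x v - x c‖ < R / 8 := by
        have := hxc.tendsto c
        have h8 : (0:ℝ) < R / 8 := by positivity
        filter_upwards [this (ball_mem_nhds (x c) h8)] with v hv
        simpa [Set.mem_preimage, mem_ball, dist_eq_norm] using hv
      obtain ⟨ε, hε0, hε⟩ := Metric.eventually_nhds_iff.mp this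
      set u : ℝ := min y (c + ε / 2) with hu
      have hcu : c < u := lt_min hy (by linarith)
      have hstay : ∀ v ∈ Icc c u, ‖x v‖ ≤ R / 2 := by
        intro v hv
        have hvc : dist v c < ε := by
          rw [Real.dist_eq, abs_of_nonneg (by linarith [hv.1])]
          have : v ≤ c + ε / 2 := le_trans hv.2 (min_le_right _ _)
          linarith
        have := hε hvc
        calc ‖x v‖ ≤ ‖x c‖ + ‖x v - x c‖ := by
              simpa using norm_add_le (x c) (x v - x c)
          _ ≤ R / 4 + R / 8 := by gcongr
          _ ≤ R / 2 := by linarith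
      have hbound : ∀ v ∈ Ico c u, ‖F (x v)‖ ≤ M₁ + 1 := by
        intro v hv
        have hv2 : x v ∈ closedBall (0 : Fin n → ℂ) (3 * R / 4) := by
          rw [mem_closedBall_zero_iff]
          have := hstay v (Ico_subset_Icc_self hv)
          linarith
        calc ‖F (x v)‖ ≤ M₁ := hM₁ _ hv2
          _ ≤ M₁ + 1 := by linarith
      have hmvt : ‖x u - x c‖ ≤ (M₁ + 1) * (u - c) :=
        norm_image_sub_le_of_norm_deriv_le_segment'
          (f := x) (f' := fun v => F (x v)) (a := c) (b := u) (C := M₁ + 1)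
          (fun v _ => (hx v).hasDerivWithinAt) hbound u
          (by constructor <;> linarith)
      refine ⟨u, ?_, hcu, min_le_left _ _⟩
      calc ‖x u - x t₁‖ ≤ ‖x u - x c‖ + ‖x c - x t₁‖ := norm_sub_le_norm_sub_add_norm_sub _ _ _
        _ ≤ (M₁ + 1) * (u - c) + (M₁ + 1) * (c - t₁) := by gcongr <;> first | exact hmvt | exact hc1
        _ = (M₁ + 1) * (u - t₁) := by ring
  -- Step 2: the whole orbit stays in the ball of radius R/2
  have hK : ∀ t : ℝ, ‖x t‖ ≤ R / 2 := by
    intro t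
    obtain ⟨y, hy, hxy⟩ := hper.exists_mem_Ico hT t t₁
    have htrap := trap y (Ico_subset_Icc_self hy)
    have htri : ‖x y‖ ≤ ‖x t₁‖ + ‖x y - x t₁‖ := by
      simpa using norm_add_le (x t₁) (x y - x t₁)
    have hmul : (M₁ + 1) * (y - t₁) ≤ (M₁ + 1) * T :=
      mul_le_mul_of_nonneg_left (by linarith [hy.1, hy.2]) (by positivity)
    rw [hxy]
    nlinarith [hT₁]
  -- continuity of F ∘ x
  have hcontFx : Continuous fun t => F (x t) :=
    hF.continuousOn.comp_continuous hxc fun t => hΔ t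
  -- maximum of ‖F ∘ x‖ over one period
  obtain ⟨t₀, ht₀mem, ht₀max⟩ := isCompact_Icc.exists_isMaxOn
    (nonempty_Icc.mpr hT.le)
    ((continuous_norm.comp hcontFx).continuousOn : ContinuousOn (fun t => ‖F (x t)‖) (Icc 0 T))
  obtain ⟨M, hM⟩ : ∃ M : ℝ, M = ‖F (x t₀)‖ := ⟨_, rfl⟩
  have hM0 : 0 ≤ M := hM ▸ norm_nonneg _
  have hMglob : ∀ t : ℝ, ‖F (x t)‖ ≤ M := by
    intro t
    have hperF : Function.Periodic (fun t => ‖F (x t)‖) T := fun s => by simp [hper s]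
    obtain ⟨y, hy, hxy⟩ := hperF.exists_mem_Ico₀ hT t
    rw [hM]
    calc ‖F (x t)‖ = ‖F (x y)‖ := hxy
      _ ≤ ‖F (x t₀)‖ := ht₀max ⟨hy.1, hy.2.le⟩
  -- x is Lipschitz with constant M
  have hxlip : ∀ a b : ℝ, a ≤ b → ‖x b - x a‖ ≤ M * (b - a) := by
    intro a b hab
    exact norm_image_sub_le_of_norm_deriv_le_segment' (C := M) (f' := fun v => F (x v))
      (fun v _ => (hx v).hasDerivWithinAt) (fun v _ => hMglob v) b ⟨hab, le_refl b⟩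
  have hdiam : ∀ t ∈ Icc (0:ℝ) T, ‖x t₀ - x t‖ ≤ M * T := by
    intro t ht
    rcases le_total t t₀ with h | h
    · calc ‖x t₀ - x t‖ ≤ M * (t₀ - t) := hxlip t t₀ h
        _ ≤ M * T := mul_le_mul_of_nonneg_left
            (by linarith [ht.1, ht₀mem.2]) hM0
    · rw [norm_sub_rev]
      calc ‖x t - x t₀‖ ≤ M * (t - t₀) := hxlip t₀ t h
        _ ≤ M * T := mul_le_mul_of_nonneg_left
            (by linarith [ht.2, ht₀mem.1]) hM0
  -- the integral of the derivative over one period is zero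
  have hint0 : (∫ t in (0:ℝ)..T, F (x t)) = 0 := by
    rw [intervalIntegral.integral_eq_sub_of_hasDerivAt (fun t _ => hx t)
      (hcontFx.intervalIntegrable 0 T)]
    have hxT : x T = x 0 := by simpa using hper 0
    simp [hxT]
  have key : T • F (x t₀) = ∫ t in (0:ℝ)..T, (F (x t₀) - F (x t)) := by
    rw [intervalIntegral.integral_sub intervalIntegrable_const
      (hcontFx.intervalIntegrable 0 T), hint0, sub_zero]
    simp
  have hnorm : ‖∫ t in (0:ℝ)..T, (F (x t₀) - F (x t))‖ ≤ (L * (M * T)) * |T - 0| := by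
    apply intervalIntegral.norm_integral_le_of_norm_le_const
    intro t ht
    rw [uIoc_of_le hT.le] at ht
    calc ‖F (x t₀) - F (x t)‖ ≤ L * ‖x t₀ - x t‖ := hLip (x t) (x t₀) (hK t) (hK t₀)
      _ ≤ L * (M * T) := mul_le_mul_of_nonneg_left (hdiam t ⟨ht.1.le, ht.2⟩) hL0.le
  have hTM : T * M ≤ L * (M * T) * T := by
    have h1 : ‖T • F (x t₀)‖ = T * M := by
      rw [norm_smul, Real.norm_of_nonneg hT.le, hM]
    rw [← h1, key]
    calc ‖∫ t in (0:ℝ)..T, (F (x t₀) - F (x t))‖ ≤ (L * (M * T)) * |T - 0| := hnorm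
      _ = L * (M * T) * T := by rw [sub_zero, abs_of_nonneg hT.le]
  -- hence M = 0
  have hMzero : M = 0 := by
    by_contra hMne
    have hMpos : 0 < M := lt_of_le_of_ne hM0 (Ne.symm hMne)
    have h2 : (T * L) * (M * T) ≤ (1/2) * (M * T) :=
      mul_le_mul_of_nonneg_right hTL (by positivity)
    nlinarith [mul_pos hT hMpos]
  -- so F vanishes along the orbit, and x is constant: contradiction
  have hF0x : ∀ t : ℝ, F (x t) = 0 := by
    intro t
    have := hMglob t
    rw [hMzero] at this
    exact norm_le_zero_iff.mp this
  have hdiff : Differentiable ℝ x := fun t => (hx t).differentiableAt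
  have hfd : ∀ s : ℝ, fderiv ℝ x s = 0 := by
    intro s
    have h := hx s
    rw [hF0x s] at h
    rw [h.hasFDerivAt.fderiv]
    ext v
    simp
  obtain ⟨t, ht⟩ := hne
  exact ht (is_const_of_fderiv_eq_zero hdiff hfd t 0)
end
end

section
/- (Gregor) Consider ż = P(z) with P holomorphic on an open set U ⊆ ℂ and 0 ∈ U a simple zero of P. Then 0 is a center if and only if P'(0) is purely imaginary; and in that case 0 is an isochronous center whose surrounding cycles all have period 2π/|P'(0)|. -/
open Set Metric Filter Topology Real
open scoped ENNReal NNReal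

set_option maxHeartbeats 1000000

noncomputable section


/-- `x : ℝ → ℂ` is a nonconstant periodic solution of `ż = P(z)` staying in `U`,
with least positive period `T`. -/
def IsPerSolC (P : ℂ → ℂ) (U : Set ℂ) (x : ℝ → ℂ) (T : ℝ) : Prop :=
  (∀ t, x t ∈ U) ∧ (∀ t, HasDerivAt x (P (x t)) t) ∧ 0 < T ∧
    Function.Periodic x T ∧ (∃ t, x t ≠ x 0) ∧
    ∀ s, 0 < s → Function.Periodic x s → T ≤ s

/-- `0` is a center of `ż = P(z)`: some punctured neighborhood of `0` consists of
periodic orbits. -/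
def IsCenter (P : ℂ → ℂ) (U : Set ℂ) : Prop :=
  ∃ V ∈ 𝓝 (0 : ℂ), V ⊆ U ∧ ∀ z ∈ V \ {0}, ∃ (x : ℝ → ℂ) (T : ℝ),
    IsPerSolC P U x T ∧ x 0 = z ∧ Set.range x ⊆ V \ {0}

lemma exists_primitive {q : ℂ → ℂ} (hq : AnalyticAt ℂ q 0) :
    ∃ (G : ℂ → ℂ) (r : ℝ), 0 < r ∧ G 0 = 0 ∧
      ∀ z ∈ Metric.ball (0:ℂ) r, HasDerivAt G (q z) z := by
  obtain ⟨p, R, hR⟩ : ∃ p R, HasFPowerSeriesOnBall q p 0 R := hq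
  obtain ⟨ρ, hρ0, hρR⟩ : ∃ ρ : NNReal, 0 < (ρ : ℝ≥0∞) ∧ (ρ : ℝ≥0∞) < R :=
    ENNReal.lt_iff_exists_nnreal_btwn.mp hR.r_pos
  have hρ0' : 0 < (ρ : ℝ) := by exact_mod_cast hρ0
  set g : ℕ → ℂ → ℂ := fun n z => (p.coeff n / (n + 1)) * z ^ (n + 1) with hg
  set g' : ℕ → ℂ → ℂ := fun n z => p.coeff n * z ^ n with hg'
  set u : ℕ → ℝ := fun n => ‖p n‖ * (ρ : ℝ) ^ n with hu
  have husum : Summable u := p.summable_norm_mul_pow (hρR.trans_le hR.r_le)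
  have hcoeff : ∀ n, ‖p.coeff n‖ ≤ ‖p n‖ := by
    intro n
    calc ‖p.coeff n‖ = ‖p n (fun _ => 1)‖ := by
          rw [FormalMultilinearSeries.coeff]
          congr 1
      _ ≤ ‖p n‖ * ∏ _i : Fin n, ‖(1:ℂ)‖ := (p n).le_opNorm _
      _ = ‖p n‖ := by simp
  have hgderiv : ∀ n y, HasDerivAt (g n) (g' n y) y := by
    intro n y
    have h1 : HasDerivAt (fun z : ℂ => z ^ (n + 1)) ((n + 1 : ℕ) * y ^ n) y := by
      simpa using hasDerivAt_pow (n + 1) y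
    have := h1.const_mul (p.coeff n / (n + 1))
    refine this.congr_deriv ?_
    have hn1 : ((n : ℂ) + 1) ≠ 0 := Nat.cast_add_one_ne_zero n
    simp only [hg']
    push_cast
    field_simp
  have hbound : ∀ n y, y ∈ Metric.ball (0:ℂ) (ρ : ℝ) → ‖g' n y‖ ≤ u n := by
    intro n y hy
    simp only [mem_ball, dist_zero_right] at hy
    calc ‖g' n y‖ = ‖p.coeff n‖ * ‖y‖ ^ n := by simp [hg', norm_mul, norm_pow]
      _ ≤ ‖p n‖ * (ρ : ℝ) ^ n :=
        mul_le_mul (hcoeff n) (pow_le_pow_left₀ (norm_nonneg _) hy.le n)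
          (pow_nonneg (norm_nonneg _) n) (norm_nonneg _)
  have hg0 : ∀ n, g n 0 = 0 := by intro n; simp [hg]
  refine ⟨fun z => ∑' n, g n z, (ρ : ℝ), hρ0', by simp [hg0], ?_⟩
  intro z hz
  have key := hasDerivAt_tsum_of_isPreconnected husum isOpen_ball
    (convex_ball (0:ℂ) (ρ:ℝ)).isPreconnected (fun n y _ => hgderiv n y) hbound
    (mem_ball_self hρ0') (by simp only [hg0]; exact summable_zero) hz
  refine key.congr_deriv ?_
  -- q z = ∑' n, g' n z
  have hzball : z ∈ Metric.eball (0 : ℂ) R := by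
    rw [← Metric.emetric_ball_nnreal] at hz
    exact EMetric.ball_subset_ball hρR.le hz
  have hsum := hR.hasSum (y := z) (by simpa using hzball)
  simp only [zero_add] at hsum
  have : (fun n => p n fun _ => z) = fun n => p.coeff n * z ^ n := by
    funext n
    rw [FormalMultilinearSeries.apply_eq_pow_smul_coeff, smul_eq_mul]
    ring
  rw [this] at hsum
  exact hsum.tsum_eq

lemma linearize (U : Set ℂ) (hU : IsOpen U) (h0U : (0:ℂ) ∈ U) (P : ℂ → ℂ)
    (hP : DifferentiableOn ℂ P U) (hP0 : P 0 = 0) (hP' : deriv P 0 ≠ 0) :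
    ∃ (Φ : OpenPartialHomeomorph ℂ ℂ) (φd : ℂ → ℂ),
      0 ∈ Φ.source ∧ Φ.source ⊆ U ∧ Φ 0 = 0 ∧
      (∀ z ∈ Φ.source, HasDerivAt Φ (φd z) z) ∧
      (∀ z ∈ Φ.source, φd z ≠ 0) ∧
      (∀ z ∈ Φ.source, φd z * P z = deriv P 0 * Φ z) := by
  set a := deriv P 0 with ha
  have hPa : AnalyticAt ℂ P 0 := hP.analyticAt (hU.mem_nhds h0U)
  set g := dslope P 0 with hgdef
  have hg0 : g 0 = a := dslope_same P 0
  have hPg : ∀ z, P z = z * g z := by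
    intro z
    have h1 := sub_smul_dslope P 0 z
    simp only [sub_zero, smul_eq_mul, hP0] at h1
    rw [← hgdef] at h1
    rw [h1]
  have hga : AnalyticAt ℂ g 0 := by
    obtain ⟨p, hp⟩ := hPa
    exact hp.has_fpower_series_dslope_fslope.analyticAt
  set h := dslope g 0 with hhdef
  have hha : AnalyticAt ℂ h 0 := by
    obtain ⟨p, hp⟩ := hga
    exact hp.has_fpower_series_dslope_fslope.analyticAt
  have hzh : ∀ z, z * h z = g z - a := by
    intro z
    have h1 := sub_smul_dslope g 0 z
    simp only [sub_zero, smul_eq_mul, hg0] at h1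
    rw [← hhdef] at h1
    rw [h1]
  set q := fun z => -(h z) / g z with hqdef
  have hqa : AnalyticAt ℂ q 0 := (hha.neg).div hga (by rw [hg0]; exact hP')
  obtain ⟨G, r2, hr20, hG0, hG⟩ := exists_primitive hqa
  have hgne : ∀ᶠ z in 𝓝 (0:ℂ), g z ≠ 0 :=
    hga.continuousAt.eventually_ne (by rw [hg0]; exact hP')
  have hmem : (U ∩ {z | g z ≠ 0} ∩ Metric.ball (0:ℂ) r2) ∈ 𝓝 (0:ℂ) := by
    refine inter_mem (inter_mem (hU.mem_nhds h0U) hgne) ?_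
    exact isOpen_ball.mem_nhds (mem_ball_self hr20)
  obtain ⟨r, hr0, hrsub⟩ := Metric.mem_nhds_iff.mp hmem
  set D := Metric.ball (0:ℂ) r with hDdef
  set φ : ℂ → ℂ := fun z => z * Complex.exp (G z) with hφdef
  set φd : ℂ → ℂ := fun z => a * Complex.exp (G z) / g z with hφddef
  have hDU : D ⊆ U := fun z hz => (hrsub hz).1.1
  have hDg : ∀ z ∈ D, g z ≠ 0 := fun z hz => (hrsub hz).1.2
  have hDr2 : D ⊆ Metric.ball (0:ℂ) r2 := fun z hz => (hrsub hz).2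
  have h0D : (0:ℂ) ∈ D := mem_ball_self hr0
  have hφderiv : ∀ z ∈ D, HasDerivAt φ (φd z) z := by
    intro z hz
    have hDz : HasDerivAt G (q z) z := hG z (hDr2 hz)
    have h1 : HasDerivAt (fun w => Complex.exp (G w)) (Complex.exp (G z) * q z) z := hDz.cexp
    have h2 : HasDerivAt φ (1 * Complex.exp (G z) + z * (Complex.exp (G z) * q z)) z :=
      (hasDerivAt_id z).mul h1
    refine h2.congr_deriv ?_
    have hgz : g z ≠ 0 := hDg z hz
    have hzh' := hzh z
    simp only [hφddef, hqdef]
    field_simp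
    linear_combination (-1 : ℂ) * hzh'
  have hφdne : ∀ z ∈ D, φd z ≠ 0 := fun z hz =>
    div_ne_zero (mul_ne_zero hP' (Complex.exp_ne_zero _)) (hDg z hz)
  have hφeq : ∀ z ∈ D, φd z * P z = a * φ z := by
    intro z hz
    have hgz : g z ≠ 0 := hDg z hz
    rw [hPg z]
    simp only [hφddef, hφdef]
    field_simp
  have hφ0 : φ 0 = 0 := by simp [hφdef]
  -- strict derivative 1 at 0
  have hφa : AnalyticAt ℂ φ 0 := by
    have hdiff : DifferentiableOn ℂ φ D := fun z hz => (hφderiv z hz).differentiableAt.differentiableWithinAt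
    exact hdiff.analyticAt (isOpen_ball.mem_nhds h0D)
  have hd0 : deriv φ 0 = 1 := by
    rw [(hφderiv 0 h0D).deriv]
    simp [hφddef, hG0, hg0]
    exact hP'
  have hsd : HasStrictDerivAt φ 1 0 := by
    have h1 := hφa.hasStrictFDerivAt.hasStrictDerivAt
    rwa [fderiv_apply_one_eq_deriv, hd0] at h1
  have hne1 : (1:ℂ) ≠ 0 := one_ne_zero
  set Φ₀ := (hsd.hasStrictFDerivAt_equiv hne1).toOpenPartialHomeomorph φ with hΦ₀
  set Φ := Φ₀.restrOpen D isOpen_ball with hΦ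
  have hcoe : ⇑Φ = φ := rfl
  have hsource : Φ.source = Φ₀.source ∩ D := Φ₀.restrOpen_source D isOpen_ball
  have h0S : (0:ℂ) ∈ Φ.source := by
    rw [hsource]
    exact ⟨(hsd.hasStrictFDerivAt_equiv hne1).mem_toOpenPartialHomeomorph_source, h0D⟩
  have hSD : Φ.source ⊆ D := by rw [hsource]; exact inter_subset_right
  refine ⟨Φ, φd, h0S, fun z hz => hDU (hSD hz), by rw [hcoe]; exact hφ0, ?_, ?_, ?_⟩
  · intro z hz; rw [hcoe]; exact hφderiv z (hSD hz)
  · intro z hz; exact hφdne z (hSD hz)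
  · intro z hz; rw [hcoe]; exact hφeq z (hSD hz)


lemma flow_linear {P : ℂ → ℂ} {Φ : OpenPartialHomeomorph ℂ ℂ} {φd : ℂ → ℂ} {a : ℂ}
    (hΦd : ∀ z ∈ Φ.source, HasDerivAt Φ (φd z) z)
    (hfeq : ∀ z ∈ Φ.source, φd z * P z = a * Φ z)
    {x : ℝ → ℂ} (hxder : ∀ t, HasDerivAt x (P (x t)) t)
    {c d : ℝ} (hcd : c ≤ d) (hin : ∀ t ∈ Icc c d, x t ∈ Φ.source) :
    Φ (x d) = Complex.exp (a * ((d:ℂ) - (c:ℂ))) * Φ (x c) := by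
  set F : ℝ → ℂ := fun t => Complex.exp (-(a * (t:ℂ))) * Φ (x t) with hF
  have hder : ∀ t ∈ Icc c d, HasDerivAt F 0 t := by
    intro t ht
    have hxt := hin t ht
    have h1 : HasDerivAt (fun s : ℝ => Complex.exp (-(a * (s:ℂ))))
        (-a * Complex.exp (-(a * (t:ℂ)))) t := by
      have h0 : HasDerivAt (fun s : ℂ => Complex.exp (-(a * s)))
          (Complex.exp (-(a * (t:ℂ))) * -(a * 1)) (t:ℂ) :=
        (((hasDerivAt_id ((t:ℝ):ℂ)).const_mul a).neg).cexp
      convert h0.comp_ofReal using 1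
      ring
    have h2 : HasDerivAt (fun s : ℝ => Φ (x s)) (P (x t) • φd (x t)) t :=
      (hΦd (x t) hxt).scomp t (hxder t)
    have h3 := h1.mul h2
    refine h3.congr_deriv ?_
    have heq := hfeq (x t) hxt
    rw [smul_eq_mul]
    linear_combination Complex.exp (-(a * (t:ℂ))) * heq
  have hcont : ContinuousOn F (Icc c d) := fun t ht =>
    (hder t ht).continuousAt.continuousWithinAt
  have hconst : F d = F c := by
    have := constant_of_has_deriv_right_zero hcont
      (fun t ht => (hder t (Ico_subset_Icc_self ht)).hasDerivWithinAt)
    exact this d (right_mem_Icc.mpr hcd)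
  have h5 : Complex.exp (-(a * (d:ℂ))) * Φ (x d) = Complex.exp (-(a * (c:ℂ))) * Φ (x c) := hconst
  have h6 : Φ (x d) = Complex.exp (a * (d:ℂ)) * (Complex.exp (-(a * (c:ℂ))) * Φ (x c)) := by
    rw [← h5, ← mul_assoc, ← Complex.exp_add]
    simp
  rw [h6, ← mul_assoc, ← Complex.exp_add]
  congr 2
  ring

lemma center_pure_imag (U : Set ℂ) (hU : IsOpen U) (h0U : (0 : ℂ) ∈ U)
    (P : ℂ → ℂ) (hP : DifferentiableOn ℂ P U)
    (hP0 : P 0 = 0) (hP' : deriv P 0 ≠ 0) (hC : IsCenter P U) :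
    ∃ ω : ℝ, ω ≠ 0 ∧ deriv P 0 = (ω : ℂ) * Complex.I := by
  obtain ⟨Φ, φd, h0S, hSU, hΦ0, hΦd, hφdne, hfeq⟩ := linearize U hU h0U P hP hP0 hP'
  set a := deriv P 0 with ha
  suffices hre : a.re = 0 by
    refine ⟨a.im, ?_, ?_⟩
    · intro h
      apply hP'
      apply Complex.ext <;> simp [hre, h]
    · apply Complex.ext <;> simp [hre]
  by_contra hre
  obtain ⟨V, hVn, hVU, hVorb⟩ := hC
  obtain ⟨δ, hδ0, hδS⟩ : ∃ δ > 0, Metric.closedBall (0:ℂ) δ ⊆ Φ.source :=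
    nhds_basis_closedBall.mem_iff.mp (Φ.open_source.mem_nhds h0S)
  have hballS : Metric.ball (0:ℂ) δ ⊆ Φ.source := ball_subset_closedBall.trans hδS
  have hsne : (Metric.sphere (0:ℂ) δ).Nonempty := NormedSpace.sphere_nonempty.mpr hδ0.le
  have hΦcont : ContinuousOn (fun z => ‖Φ z‖) (Metric.sphere (0:ℂ) δ) :=
    continuous_norm.comp_continuousOn
      (Φ.continuousOn.mono (sphere_subset_closedBall.trans hδS))
  obtain ⟨z₁, hz₁s, hz₁min⟩ := (isCompact_sphere (0:ℂ) δ).exists_isMinOn hsne hΦcont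
  set m := ‖Φ z₁‖ with hm
  have hΦne : ∀ y ∈ Φ.source, y ≠ 0 → Φ y ≠ 0 := by
    intro y hyS hy0 he
    exact hy0 (Φ.injOn hyS h0S (he.trans hΦ0.symm))
  have hm0 : 0 < m := by
    have hz₁0 : z₁ ≠ 0 := by
      intro h
      rw [h] at hz₁s
      simp only [mem_sphere_iff_norm, sub_zero, norm_zero] at hz₁s
      exact hδ0.ne hz₁s
    have := hΦne z₁ (sphere_subset_closedBall.trans hδS hz₁s) hz₁0
    simpa [hm] using this
  set ρ := m / 2 with hρ
  have hρ0 : 0 < ρ := by positivity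
  set E := Metric.ball (0:ℂ) δ ∩ ⇑Φ ⁻¹' (Metric.ball (0:ℂ) ρ) with hE
  have hEopen : IsOpen E :=
    (Φ.continuousOn.mono hballS).isOpen_inter_preimage isOpen_ball isOpen_ball
  have h0E : (0:ℂ) ∈ E := ⟨mem_ball_self hδ0, by simp [mem_preimage, hΦ0, mem_ball_self hρ0]⟩
  obtain ⟨ε, hε0, hεsub⟩ := Metric.mem_nhds_iff.mp (inter_mem hVn (hEopen.mem_nhds h0E))
  set z : ℂ := ((ε/2 : ℝ) : ℂ) with hz
  have hzmem : z ∈ V ∩ E := by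
    apply hεsub
    simp only [mem_ball, dist_zero_right, hz, Complex.norm_real, Real.norm_eq_abs]
    rw [abs_of_pos (by positivity)]
    linarith
  have hz0 : z ≠ 0 := by
    simp only [hz, ne_eq, Complex.ofReal_eq_zero]
    positivity
  obtain ⟨x, T, ⟨hxU, hxder, hT0, hxper, hxnc, hxmin⟩, hx0, hxrange⟩ :=
    hVorb z ⟨hzmem.1, hz0⟩
  have hxcont : Continuous x := by
    rw [continuous_iff_continuousAt]
    exact fun t => (hxder t).continuousAt
  -- closure of E facts
  have hEC : closure E ⊆ Metric.closedBall (0:ℂ) δ ∩ ⇑Φ ⁻¹' (Metric.closedBall (0:ℂ) ρ) := by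
    apply closure_minimal
    · intro y hy
      refine ⟨ball_subset_closedBall hy.1, ?_⟩
      rw [mem_preimage]
      exact ball_subset_closedBall (mem_preimage.mp hy.2)
    · exact (Φ.continuousOn.mono hδS).preimage_isClosed_of_isClosed Metric.isClosed_closedBall
        Metric.isClosed_closedBall
  have hbd : ∀ y, y ∈ closure E → y ∉ E →
      y ∈ Metric.ball (0:ℂ) δ ∧ ‖Φ y‖ = ρ := by
    intro y hyc hyE
    obtain ⟨hy1, hy2⟩ := hEC hyc
    simp only [mem_preimage, Metric.mem_closedBall, dist_zero_right] at hy2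
    have hyball : y ∈ Metric.ball (0:ℂ) δ := by
      rcases lt_or_eq_of_le (mem_closedBall_zero_iff.mp hy1) with h | h
      · exact mem_ball_zero_iff.mpr h
      · exfalso
        have hys : y ∈ Metric.sphere (0:ℂ) δ := by simp [mem_sphere_iff_norm, h]
        have := (isMinOn_iff.mp hz₁min) y hys
        rw [← hm] at this
        have : m ≤ ρ := le_trans this hy2
        rw [hρ] at this
        linarith
    refine ⟨hyball, le_antisymm hy2 ?_⟩
    by_contra hlt
    push_neg at hlt
    exact hyE ⟨hyball, by simpa [mem_preimage, mem_ball, dist_zero_right] using hlt⟩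
  have hzE : z ∈ E := hzmem.2
  have hx0E : x 0 ∈ E := hx0 ▸ hzE
  have hxT : x T = x 0 := by simpa using (hxper 0)
  have hΦz : ‖Φ (x 0)‖ < ρ := by
    have := hx0E.2
    simpa [mem_preimage, mem_ball, dist_zero_right] using this
  have hΦzpos : 0 < ‖Φ (x 0)‖ := by
    have hx0S : x 0 ∈ Φ.source := hballS hx0E.1
    have := hΦne (x 0) hx0S (hx0 ▸ hz0)
    simpa using this
  by_cases hall : ∀ t ∈ Icc 0 T, x t ∈ E
  · have hflow := flow_linear hΦd hfeq hxder hT0.le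
      (fun t ht => hballS (hall t ht).1)
    rw [hxT] at hflow
    have hexp1 : Complex.exp (a * ((T:ℂ) - (0:ℂ))) = 1 := by
      have h2 : Complex.exp (a * ((T:ℂ) - (0:ℂ))) * Φ (x 0) = 1 * Φ (x 0) := by
        rw [one_mul]; exact hflow.symm
      exact mul_right_cancel₀ (fun h => by simp [h] at hΦzpos) h2
    have habs := congrArg norm hexp1
    rw [Complex.norm_exp] at habs
    simp only [norm_one] at habs
    have hre2 : (a * ((T:ℂ) - (0:ℂ))).re = a.re * T := by
      simp [Complex.mul_re]
    rw [hre2] at habs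
    have := (Real.exp_eq_one_iff _).mp habs
    rcases mul_eq_zero.mp this with h | h
    · exact hre h
    · exact hT0.ne' h
  · push_neg at hall
    obtain ⟨t₀, ht₀I, ht₀E⟩ := hall
    set B := {t | t ∈ Icc 0 T ∧ x t ∉ E} with hB
    have hBne : B.Nonempty := ⟨t₀, ht₀I, ht₀E⟩
    have hBclosed : IsClosed B := by
      have : B = Icc 0 T ∩ x ⁻¹' Eᶜ := by ext t; simp [hB, mem_preimage]
      rw [this]
      exact isClosed_Icc.inter (hEopen.isClosed_compl.preimage hxcont)
    have hBbddBelow : BddBelow B := ⟨0, fun t ht => ht.1.1⟩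
    have hBbddAbove : BddAbove B := ⟨T, fun t ht => ht.1.2⟩
    rcases lt_or_gt_of_ne hre with hneg | hpos
    · -- a.re < 0 : first entry time
      set t₁ := sInf B with ht₁
      have ht₁B : t₁ ∈ B := hBclosed.csInf_mem hBne hBbddBelow
      have ht₁pos : 0 < t₁ := by
        rcases lt_or_eq_of_le ht₁B.1.1 with h | h
        · exact h
        · exact absurd (h ▸ hx0E) ht₁B.2
      have hbefore : ∀ t ∈ Ico 0 t₁, x t ∈ E := by
        intro t ht
        by_contra hne
        have htB : t ∈ B := ⟨⟨ht.1, ht.2.le.trans ht₁B.1.2⟩, hne⟩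
        exact absurd (csInf_le hBbddBelow htB) (not_le.mpr ht.2)
      have hclosure : x t₁ ∈ closure E := by
        have h1 : ContinuousWithinAt x (Ico 0 t₁) t₁ := hxcont.continuousWithinAt
        have h2 : t₁ ∈ closure (Ico 0 t₁) := by
          rw [closure_Ico ht₁pos.ne]
          exact ⟨ht₁pos.le, le_refl _⟩
        exact closure_mono (image_subset_iff.mpr hbefore) (h1.mem_closure_image h2)
      obtain ⟨hball₁, hρeq₁⟩ := hbd _ hclosure ht₁B.2
      have hin : ∀ t ∈ Icc 0 t₁, x t ∈ Φ.source := by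
        intro t ht
        rcases lt_or_eq_of_le ht.2 with h | h
        · exact hballS (hbefore t ⟨ht.1, h⟩).1
        · exact hballS (h ▸ hball₁)
      have hflow := flow_linear hΦd hfeq hxder ht₁pos.le hin
      have habs := congrArg norm hflow
      rw [norm_mul, Complex.norm_exp, hρeq₁] at habs
      have hre2 : (a * ((t₁:ℂ) - ((0:ℝ):ℂ))).re = a.re * t₁ := by simp [Complex.mul_re]
      rw [hre2] at habs
      have hlt1 : Real.exp (a.re * t₁) < 1 :=
        Real.exp_lt_one_iff.mpr (by nlinarith)
      nlinarith [hΦz, hΦzpos, Real.exp_pos (a.re * t₁)]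
    · -- a.re > 0 : last exit time
      set t₂ := sSup B with ht₂
      have ht₂B : t₂ ∈ B := hBclosed.csSup_mem hBne hBbddAbove
      have ht₂lt : t₂ < T := by
        rcases lt_or_eq_of_le ht₂B.1.2 with h | h
        · exact h
        · exact absurd (h ▸ (hxT ▸ hx0E)) ht₂B.2
      have hafter : ∀ t ∈ Ioc t₂ T, x t ∈ E := by
        intro t ht
        by_contra hne
        have htB : t ∈ B := ⟨⟨ht₂B.1.1.trans ht.1.le, ht.2⟩, hne⟩
        exact absurd (le_csSup hBbddAbove htB) (not_le.mpr ht.1)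
      have hclosure : x t₂ ∈ closure E := by
        have h1 : ContinuousWithinAt x (Ioc t₂ T) t₂ := hxcont.continuousWithinAt
        have h2 : t₂ ∈ closure (Ioc t₂ T) := by
          rw [closure_Ioc ht₂lt.ne]
          exact ⟨le_refl _, ht₂lt.le⟩
        exact closure_mono (image_subset_iff.mpr hafter) (h1.mem_closure_image h2)
      obtain ⟨hball₂, hρeq₂⟩ := hbd _ hclosure ht₂B.2
      have hin : ∀ t ∈ Icc t₂ T, x t ∈ Φ.source := by
        intro t ht
        rcases lt_or_eq_of_le ht.1 with h | h
        · exact hballS (hafter t ⟨h, ht.2⟩).1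
        · exact hballS (h ▸ hball₂)
      have hflow := flow_linear hΦd hfeq hxder ht₂lt.le hin
      rw [hxT] at hflow
      have habs := congrArg norm hflow
      rw [norm_mul, Complex.norm_exp, hρeq₂] at habs
      have hre2 : (a * ((T:ℂ) - (t₂:ℂ))).re = a.re * (T - t₂) := by
        rw [← Complex.ofReal_sub]
        simp [Complex.mul_re]
      rw [hre2] at habs
      have hgt1 : 1 < Real.exp (a.re * (T - t₂)) :=
        Real.one_lt_exp_iff.mpr (by nlinarith)
      nlinarith [hΦz, hρ0]


lemma isochronous (U : Set ℂ) (hU : IsOpen U) (h0U : (0 : ℂ) ∈ U)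
    (P : ℂ → ℂ) (hP : DifferentiableOn ℂ P U)
    (hP0 : P 0 = 0) (hP' : deriv P 0 ≠ 0)
    (hω : ∃ ω : ℝ, ω ≠ 0 ∧ deriv P 0 = (ω : ℂ) * Complex.I) :
      ∃ V ∈ 𝓝 (0 : ℂ), V ⊆ U ∧ ∀ z ∈ V \ {0}, ∃ x : ℝ → ℂ,
        IsPerSolC P U x (2 * π / ‖deriv P 0‖) ∧ x 0 = z ∧
        Set.range x ⊆ V \ {0} := by
  obtain ⟨ω, hω0, haω⟩ := hω
  obtain ⟨Φ, φd, h0S, hSU, hΦ0, hΦd, hφdne, hfeq⟩ := linearize U hU h0U P hP hP0 hP'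
  set a := deriv P 0 with ha
  have habs : ‖a‖ = |ω| := by
    rw [haω, norm_mul, Complex.norm_I, Complex.norm_real, Real.norm_eq_abs, mul_one]
  have habspos : 0 < |ω| := abs_pos.mpr hω0
  set T : ℝ := 2 * π / ‖a‖ with hTdef
  have hTω : T = 2 * π / |ω| := by rw [hTdef, habs]
  have hT0 : 0 < T := by
    rw [hTω]; positivity
  have hωT : ω * T = 2 * π * (if 0 < ω then 1 else -1) := by
    rcases lt_or_gt_of_ne hω0 with hneg | hpos
    · rw [if_neg (not_lt.mpr hneg.le), hTω, abs_of_neg hneg]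
      field_simp
    · rw [if_pos hpos, hTω, abs_of_pos hpos]
      field_simp
  have hexpT : Complex.exp (a * (T:ℂ)) = 1 := by
    rw [Complex.exp_eq_one_iff]
    refine ⟨if 0 < ω then 1 else -1, ?_⟩
    rw [haω]
    have : (ω : ℂ) * Complex.I * (T:ℂ) = ((ω * T : ℝ) : ℂ) * Complex.I := by
      push_cast; ring
    rw [this, hωT]
    split_ifs <;> push_cast <;> ring
  have hexp_abs : ∀ t : ℝ, ‖Complex.exp (a * (t:ℂ))‖ = 1 := by
    intro t
    rw [Complex.norm_exp, haω]
    have : ((ω : ℂ) * Complex.I * (t:ℂ)).re = 0 := by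
      simp [Complex.mul_re]
    rw [this, Real.exp_zero]
  have h0T : (0:ℂ) ∈ Φ.target := by
    have := Φ.map_source h0S
    rwa [hΦ0] at this
  obtain ⟨ρ2, hρ2, hρ2sub⟩ := Metric.mem_nhds_iff.mp (Φ.open_target.mem_nhds h0T)
  set V := Φ.source ∩ ⇑Φ ⁻¹' (Metric.ball (0:ℂ) ρ2) with hVdef
  have hVopen : IsOpen V := Φ.continuousOn.isOpen_inter_preimage Φ.open_source isOpen_ball
  have hV0 : (0:ℂ) ∈ V := ⟨h0S, by simp [mem_preimage, hΦ0, mem_ball_self hρ2]⟩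
  refine ⟨V, hVopen.mem_nhds hV0, fun z hz => hSU hz.1, ?_⟩
  rintro z ⟨⟨hzS, hzb⟩, hz0⟩
  simp only [mem_preimage, mem_ball, dist_zero_right] at hzb
  have hz0' : z ≠ 0 := hz0
  set w₀ := Φ z with hw₀def
  have hw₀ : w₀ ≠ 0 := by
    intro he
    exact hz0' (Φ.injOn hzS h0S (he.trans hΦ0.symm))
  set x : ℝ → ℂ := fun t => Φ.symm (Complex.exp (a * (t:ℂ)) * w₀) with hxdef
  have hwb : ∀ t : ℝ, Complex.exp (a * (t:ℂ)) * w₀ ∈ Metric.ball (0:ℂ) ρ2 := by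
    intro t
    rw [mem_ball_zero_iff]
    calc ‖Complex.exp (a * (t:ℂ)) * w₀‖ = ‖w₀‖ := by
          rw [norm_mul]
          simp only [hexp_abs, one_mul]
      _ < ρ2 := hzb
  have hwT : ∀ t : ℝ, Complex.exp (a * (t:ℂ)) * w₀ ∈ Φ.target := fun t => hρ2sub (hwb t)
  have hwne : ∀ t : ℝ, Complex.exp (a * (t:ℂ)) * w₀ ≠ 0 := fun t =>
    mul_ne_zero (Complex.exp_ne_zero _) hw₀
  have hxS : ∀ t, x t ∈ Φ.source := fun t => Φ.map_target (hwT t)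
  have hΦx : ∀ t, Φ (x t) = Complex.exp (a * (t:ℂ)) * w₀ := fun t => Φ.right_inv (hwT t)
  have hxne : ∀ t, x t ≠ 0 := by
    intro t he
    exact hwne t (by rw [← hΦx t, he, hΦ0])
  have hxV : ∀ t, x t ∈ V := by
    intro t
    refine ⟨hxS t, ?_⟩
    simp only [mem_preimage, hΦx t]
    exact hwb t
  have hx0 : x 0 = z := by
    simp only [hxdef, Complex.ofReal_zero, mul_zero, Complex.exp_zero, one_mul]
    exact Φ.left_inv hzS
  have hxder : ∀ t, HasDerivAt x (P (x t)) t := by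
    intro t
    have h1 : HasDerivAt (fun u : ℂ => Complex.exp (a * u) * w₀)
        (Complex.exp (a * (t:ℂ)) * a * w₀) (t:ℂ) := by
      have : HasDerivAt (fun u : ℂ => Complex.exp (a * u) * w₀)
          (Complex.exp (a * (t:ℂ)) * (a * 1) * w₀) (t:ℂ) :=
        (((hasDerivAt_id ((t:ℝ):ℂ)).const_mul a).cexp).mul_const w₀
      convert this using 1
      ring
    have hw : HasDerivAt (fun s : ℝ => Complex.exp (a * (s:ℂ)) * w₀)
        (Complex.exp (a * (t:ℂ)) * a * w₀) t := h1.comp_ofReal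
    have hψ : HasDerivAt Φ.symm (φd (x t))⁻¹ (Complex.exp (a * (t:ℂ)) * w₀) := by
      refine Φ.hasDerivAt_symm (hwT t) (hφdne _ (hxS t)) ?_
      exact hΦd (x t) (hxS t)
    have hcomp := hψ.scomp t hw
    have hval : (Complex.exp (a * (t:ℂ)) * a * w₀) • (φd (x t))⁻¹ = P (x t) := by
      have heq := hfeq (x t) (hxS t)
      rw [hΦx t] at heq
      have hφdt : φd (x t) ≠ 0 := hφdne _ (hxS t)
      rw [smul_eq_mul]
      field_simp
      linear_combination -heq
    rw [hval] at hcomp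
    exact hcomp
  have hper : Function.Periodic x T := by
    intro t
    simp only [hxdef]
    congr 1
    push_cast
    rw [mul_add, Complex.exp_add, hexpT, mul_one]
  have hnc : ∃ t, x t ≠ x 0 := by
    refine ⟨T/2, ?_⟩
    have hhalf : Complex.exp (a * ((T/2 : ℝ):ℂ)) = -1 := by
      rw [haω]
      have h2 : (ω : ℂ) * Complex.I * ((T/2:ℝ):ℂ) = ((ω * T / 2 : ℝ):ℂ) * Complex.I := by
        push_cast; ring
      rw [h2, hωT]
      rcases em (0 < ω) with hpos | hneg
      · simp only [if_pos hpos]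
        have : ((2 * π * 1 / 2 : ℝ) : ℂ) * Complex.I = (π:ℂ) * Complex.I := by
          push_cast; ring
        rw [this, Complex.exp_pi_mul_I]
      · simp only [if_neg hneg]
        have : ((2 * π * -1 / 2 : ℝ) : ℂ) * Complex.I = -((π:ℂ) * Complex.I) := by
          push_cast; ring
        rw [this, Complex.exp_neg, Complex.exp_pi_mul_I]
        norm_num
    intro he
    have h1 : Φ (x (T/2)) = Φ (x 0) := by rw [he]
    rw [hΦx, hΦx, hhalf] at h1
    simp only [Complex.ofReal_zero, mul_zero, Complex.exp_zero, one_mul, neg_one_mul] at h1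
    exact hw₀ (by linear_combination -h1/2)
  have hmin : ∀ s, 0 < s → Function.Periodic x s → T ≤ s := by
    intro s hs hpers
    have hxs : x s = x 0 := by
      have := hpers 0
      simpa using this
    have h1 : Φ (x s) = Φ (x 0) := by rw [hxs]
    rw [hΦx, hΦx] at h1
    simp only [Complex.ofReal_zero, mul_zero, Complex.exp_zero, one_mul] at h1
    have hexp1 : Complex.exp (a * (s:ℂ)) = 1 := by
      have h2 : Complex.exp (a * (s:ℂ)) * w₀ = 1 * w₀ := by rw [one_mul]; exact h1
      exact mul_right_cancel₀ hw₀ h2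
    rw [Complex.exp_eq_one_iff] at hexp1
    obtain ⟨n, hn⟩ := hexp1
    rw [haω] at hn
    have hreal : ω * s = n * (2 * π) := by
      have h2 : ((ω * s : ℝ):ℂ) * Complex.I = ((n * (2*π) : ℝ):ℂ) * Complex.I := by
        push_cast at hn ⊢
        linear_combination hn
      have h3 := mul_right_cancel₀ Complex.I_ne_zero h2
      exact_mod_cast h3
    have hn0 : n ≠ 0 := by
      intro h
      rw [h] at hreal
      simp at hreal
      rcases hreal with h | h
      · exact hω0 h
      · exact hs.ne' h
    have habs2 : |ω| * s = |(n:ℝ)| * (2 * π) := by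
      have := congrArg abs hreal
      rwa [abs_mul, abs_of_pos hs, abs_mul, abs_of_pos (by positivity : (0:ℝ) < 2*π)] at this
    have hn1 : (1:ℝ) ≤ |(n:ℝ)| := by
      rw [← Int.cast_abs]
      exact_mod_cast Int.one_le_abs hn0
    rw [hTω, div_le_iff₀ habspos]
    calc 2 * π ≤ |(n:ℝ)| * (2 * π) := le_mul_of_one_le_left (by positivity) hn1
      _ = |ω| * s := habs2.symm
      _ = s * |ω| := mul_comm _ _
  exact ⟨x, ⟨fun t => hSU (hxS t), hxder, hT0, hper, hnc, hmin⟩, hx0,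
    range_subset_iff.mpr fun t => ⟨hxV t, hxne t⟩⟩


/-- **Gregor.** For `ż = P(z)` with `P` holomorphic and `0` a simple
zero of `P`: `0` is a center iff `P'(0)` is purely imaginary, and in that case `0`
is an isochronous center, all nearby cycles having period `2π/|P'(0)|`. -/
theorem gregor_center_iff_pure_imaginary
    (U : Set ℂ) (hU : IsOpen U) (h0U : (0 : ℂ) ∈ U)
    (P : ℂ → ℂ) (hP : DifferentiableOn ℂ P U)
    (hP0 : P 0 = 0) (hP' : deriv P 0 ≠ 0) :
    (IsCenter P U ↔ ∃ ω : ℝ, ω ≠ 0 ∧ deriv P 0 = (ω : ℂ) * Complex.I) ∧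
    ((∃ ω : ℝ, ω ≠ 0 ∧ deriv P 0 = (ω : ℂ) * Complex.I) →
      ∃ V ∈ 𝓝 (0 : ℂ), V ⊆ U ∧ ∀ z ∈ V \ {0}, ∃ x : ℝ → ℂ,
        IsPerSolC P U x (2 * π / ‖deriv P 0‖) ∧ x 0 = z ∧
        Set.range x ⊆ V \ {0}) := by
  refine ⟨⟨center_pure_imag U hU h0U P hP hP0 hP', ?_⟩,
    isochronous U hU h0U P hP hP0 hP'⟩
  intro hω
  obtain ⟨V, hV, hVU, hx⟩ := isochronous U hU h0U P hP hP0 hP' hω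
  refine ⟨V, hV, hVU, fun z hz => ?_⟩
  obtain ⟨x, hsol, hx0, hrange⟩ := hx z hz
  exact ⟨x, _, hsol, hx0, hrange⟩
end
end

section
/- Let φ(t,x) be the local flow of a holomorphic system ẋ = F(x) near 0, holomorphic in x, defined on [0,T₀] × closure(B_δ). If a sequence of points x_j ∈ ∂B_δ satisfies φ(t_j, x_j) = x_j with t_j → 0, and x_j → x₀ ∈ ∂B_δ, and 0 is the unique singularity of F in closure(B_δ), then a contradiction arises; more precisely, writing t₀ = m_j t_j + r_j with 0 ≤ r_j < t_j, one has φ(r_j, x_j) = φ(t₀, x_j), while sup over x ∈ closure(B_δ), 0 ≤ t ≤ t_j of |φ(t,x) − x| tends to 0. -/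
open Set Metric Filter Topology Real

noncomputable section


/-- If the local flow `φ` of a holomorphic system (with `0` the
unique singularity in the closed ball `B̄_δ`) has a sequence of fixed points
`x_j ∈ ∂B_δ` of times `t_j → 0` with `x_j → x₀ ∈ ∂B_δ`, a contradiction arises. -/
theorem no_boundary_fixed_points_of_small_times
    {n : ℕ} (R δ T₀ : ℝ) (hδ : 0 < δ) (hδR : δ < R) (hT₀ : 0 < T₀)
    (F : (Fin n → ℂ) → (Fin n → ℂ))
    (hF : DifferentiableOn ℂ F (ball (0 : Fin n → ℂ) R)) (hF0 : F 0 = 0)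
    (huniq : ∀ x ∈ closedBall (0 : Fin n → ℂ) δ, F x = 0 → x = 0)
    (φ : ℝ → (Fin n → ℂ) → (Fin n → ℂ))
    (hcont : ContinuousOn (fun p : ℝ × (Fin n → ℂ) => φ p.1 p.2)
      (Icc (0 : ℝ) T₀ ×ˢ closedBall (0 : Fin n → ℂ) δ))
    (hφ0 : ∀ x ∈ closedBall (0 : Fin n → ℂ) δ, φ 0 x = x)
    (hflow : ∀ s t : ℝ, 0 ≤ s → 0 ≤ t → ∀ x ∈ closedBall (0 : Fin n → ℂ) δ,
      φ (s + t) x = φ s (φ t x))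
    (hsol : ∀ x ∈ closedBall (0 : Fin n → ℂ) δ, ∀ t ∈ Icc (0 : ℝ) T₀,
      HasDerivAt (fun s => φ s x) (F (φ t x)) t)
    (x : ℕ → Fin n → ℂ) (t : ℕ → ℝ) (x₀ : Fin n → ℂ)
    (hx : ∀ j, x j ∈ sphere (0 : Fin n → ℂ) δ)
    (ht : ∀ j, 0 < t j) (htT : ∀ j, t j ≤ T₀)
    (hfixseq : ∀ j, φ (t j) (x j) = x j)
    (ht0 : Tendsto t atTop (𝓝 0))
    (hx0 : Tendsto x atTop (𝓝 x₀)) (hx₀ : x₀ ∈ sphere (0 : Fin n → ℂ) δ) :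
    False := by
  have hx₀b : x₀ ∈ closedBall (0 : Fin n → ℂ) δ := sphere_subset_closedBall hx₀
  have hxb : ∀ j, x j ∈ closedBall (0 : Fin n → ℂ) δ :=
    fun j => sphere_subset_closedBall (hx j)
  -- periodicity
  have per : ∀ j (m : ℕ) (s : ℝ), 0 ≤ s → φ (s + m * t j) (x j) = φ s (x j) := by
    intro j m
    induction m with
    | zero => intro s hs; simp
    | succ m ih =>
      intro s hs
      have h1 : s + ((m : ℕ) + 1 : ℕ) * t j = (s + m * t j) + t j := by push_cast; ring
      rw [h1, hflow (s + m * t j) (t j)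
        (add_nonneg hs (mul_nonneg (Nat.cast_nonneg m) (ht j).le)) (ht j).le (x j) (hxb j),
        hfixseq, ih s hs]
  have key : ∀ tt ∈ Icc (0:ℝ) T₀, φ tt x₀ = x₀ := by
    intro tt htt
    set r : ℕ → ℝ := fun j => tt - ⌊tt / t j⌋₊ * t j with hrdef
    have hr0 : ∀ j, 0 ≤ r j := by
      intro j
      have h2 : (⌊tt / t j⌋₊ : ℝ) * t j ≤ tt :=
        (le_div_iff₀ (ht j)).1 (Nat.floor_le (div_nonneg htt.1 (ht j).le))
      simpa [hrdef] using sub_nonneg.2 h2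
    have hrlt : ∀ j, r j < t j := by
      intro j
      have h3 : tt < (⌊tt / t j⌋₊ + 1 : ℝ) * t j :=
        (div_lt_iff₀ (ht j)).1 (Nat.lt_floor_add_one (tt / t j))
      have : r j = tt - ⌊tt / t j⌋₊ * t j := rfl
      rw [this]; nlinarith [h3]
    have heq : ∀ j, φ tt (x j) = φ (r j) (x j) := by
      intro j
      have h4 : tt = r j + ⌊tt / t j⌋₊ * t j := by simp [hrdef]
      conv_lhs => rw [h4]
      exact per j _ _ (hr0 j)
    have hrt : Tendsto r atTop (𝓝 0) :=
      squeeze_zero (fun j => hr0 j) (fun j => (hrlt j).le) ht0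
    have l1 : Tendsto (fun j => φ tt (x j)) atTop (𝓝 (φ tt x₀)) := by
      have h5 : Tendsto (fun j => ((tt, x j) : ℝ × (Fin n → ℂ))) atTop
          (𝓝[Icc (0:ℝ) T₀ ×ˢ closedBall (0 : Fin n → ℂ) δ] (tt, x₀)) :=
        tendsto_nhdsWithin_of_tendsto_nhds_of_eventually_within _
          (tendsto_const_nhds.prodMk_nhds hx0)
          (Eventually.of_forall fun j => ⟨htt, hxb j⟩)
      exact (hcont (tt, x₀) ⟨htt, hx₀b⟩).tendsto.comp h5
    have l2 : Tendsto (fun j => φ (r j) (x j)) atTop (𝓝 (φ 0 x₀)) := by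
      have h5 : Tendsto (fun j => ((r j, x j) : ℝ × (Fin n → ℂ))) atTop
          (𝓝[Icc (0:ℝ) T₀ ×ˢ closedBall (0 : Fin n → ℂ) δ] (0, x₀)) :=
        tendsto_nhdsWithin_of_tendsto_nhds_of_eventually_within _
          (hrt.prodMk_nhds hx0)
          (Eventually.of_forall fun j => ⟨⟨hr0 j, (hrlt j).le.trans (htT j)⟩, hxb j⟩)
      exact (hcont (0, x₀) ⟨⟨le_refl 0, hT₀.le⟩, hx₀b⟩).tendsto.comp h5
    rw [hφ0 x₀ hx₀b] at l2
    exact tendsto_nhds_unique l1 (l2.congr fun j => (heq j).symm)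
  have hmem : T₀ / 2 ∈ Icc (0:ℝ) T₀ := ⟨by positivity, by linarith⟩
  have hd := hsol x₀ hx₀b (T₀ / 2) hmem
  rw [key (T₀ / 2) hmem] at hd
  have hev : (fun s => φ s x₀) =ᶠ[𝓝 (T₀ / 2)] fun _ => x₀ := by
    filter_upwards [Icc_mem_nhds (by positivity : (0:ℝ) < T₀ / 2) (by linarith : T₀ / 2 < T₀)]
      with s hs
    exact key s hs
  have hd0 : HasDerivAt (fun s => φ s x₀) 0 (T₀ / 2) :=
    (hasDerivAt_const (T₀ / 2) x₀).congr_of_eventuallyEq hev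
  have hFx₀ : F x₀ = 0 := hd.unique hd0
  have hx₀0 : x₀ = 0 := huniq x₀ hx₀b hFx₀
  rw [hx₀0] at hx₀
  simp [mem_sphere, dist_self] at hx₀
  linarith
end
end
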